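/- arXiv:math/0602436 — 11 statements merged into one kernel-verified Lean document; each statement's English description precedes it below -/
import Mathlib

section
/- Let Γ be a simple graph of order n and let μ be the algebraic connectivity of Γ (the second smallest eigenvalue of the Laplacian matrix of Γ). Then every defensive alliance S in Γ satisfies |S| ≥ ⌈nμ/(n+μ)⌉; in particular the defensive alliance number satisfies a(Γ) ≥ ⌈nμ/(n+μ)⌉. -/
open Finset SimpleGraph

/-- `μ` is the second smallest (counted with multiplicity) value of the family `e`. -/
def IsSecondSmallest {ι : Type*} (e : ι → ℝ) (μ : ℝ) : Prop :=
  ∃ i₀ i₁ : ι, i₀ ≠ i₁ ∧ e i₀ ≤ μ ∧ e i₁ = μ ∧ ∀ j : ι, j ≠ i₀ → μ ≤ e j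

/-- `lam` is the largest value of the family `e`. -/
def IsLargest {ι : Type*} (e : ι → ℝ) (lam : ℝ) : Prop :=
  (∃ i : ι, e i = lam) ∧ ∀ i : ι, e i ≤ lam

/-!
Test the Rayleigh quotient of the Laplacian `L` on the centred indicator `x = 1_S - (s/n)·1`,
`s = |S|`. It is orthogonal to the all-ones vector, which lies in the kernel of `L`, so
`μ‖x‖² ≤ xᵀLx`. Here `‖x‖² = s(n - s)/n`, and `xᵀLx` counts the edges leaving `S`, at most `s²`
since each `v ∈ S` has at most `|N_S(v)| + 1 ≤ s` neighbours outside `S`. Hence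
`μ(n - s) ≤ ns`, i.e. `s ≥ nμ/(n + μ)`.
-/

open Matrix
open scoped RealInnerProductSpace

namespace Matrix.IsHermitian

variable {n : Type*} [Fintype n] [DecidableEq n] {A : Matrix n n ℝ} (hA : A.IsHermitian)

lemma eigenvectorBasis_dotProduct_mulVec (j : n) (x : EuclideanSpace ℝ n) :
    ⇑(hA.eigenvectorBasis j) ⬝ᵥ (A *ᵥ ⇑x) = hA.eigenvalues j * ⟪hA.eigenvectorBasis j, x⟫ := by
  have hAT : Aᵀ = A := isHermitian_iff_isSymm.mp hA
  rw [dotProduct_mulVec, ← mulVec_transpose, hAT, hA.mulVec_eigenvectorBasis, smul_dotProduct,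
    smul_eq_mul, EuclideanSpace.inner_eq_star_dotProduct]
  simp [dotProduct_comm]

lemma dotProduct_mulVec_eq_sum_eigenvalues_mul_sq (x : EuclideanSpace ℝ n) :
    ⇑x ⬝ᵥ (A *ᵥ ⇑x) = ∑ j, hA.eigenvalues j * ⟪hA.eigenvectorBasis j, x⟫ ^ 2 := by
  conv_lhs => enter [1]; rw [← (hA.eigenvectorBasis).sum_repr' x]
  simp only [WithLp.ofLp_sum, WithLp.ofLp_smul, sum_dotProduct, smul_dotProduct,
    eigenvectorBasis_dotProduct_mulVec, smul_eq_mul]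
  exact Finset.sum_congr rfl fun j _ => by ring

lemma mul_sq_norm_le_dotProduct_mulVec {μ : ℝ} {i₀ : n} (hμ : ∀ j ≠ i₀, μ ≤ hA.eigenvalues j)
    {x : EuclideanSpace ℝ n} (hx : ⟪hA.eigenvectorBasis i₀, x⟫ = 0) :
    μ * ‖x‖ ^ 2 ≤ ⇑x ⬝ᵥ (A *ᵥ ⇑x) := by
  rw [hA.dotProduct_mulVec_eq_sum_eigenvalues_mul_sq, ← (hA.eigenvectorBasis).sum_sq_inner_right,
    Finset.mul_sum]
  refine Finset.sum_le_sum fun j _ => ?_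
  rcases eq_or_ne j i₀ with rfl | hj
  · simp [hx]
  · exact mul_le_mul_of_nonneg_right (hμ j hj) (sq_nonneg _)

lemma inner_eigenvectorBasis_eq_zero_of_mulVec_eq_zero {j : n} (hj : hA.eigenvalues j ≠ 0)
    {o : EuclideanSpace ℝ n} (ho : A *ᵥ ⇑o = 0) : ⟪hA.eigenvectorBasis j, o⟫ = 0 := by
  have := hA.eigenvectorBasis_dotProduct_mulVec j o
  rw [ho, dotProduct_zero] at this
  exact (mul_eq_zero.mp this.symm).resolve_left hj

end Matrix.IsHermitian

namespace Matrix.PosSemidef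

variable {n : Type*} [Fintype n] [DecidableEq n] {A : Matrix n n ℝ} (hA : A.PosSemidef)

lemma mul_sq_norm_le_dotProduct_mulVec_of_inner_eq_zero {μ : ℝ} {i₀ : n}
    (hμ : ∀ j ≠ i₀, μ ≤ hA.1.eigenvalues j) {o : EuclideanSpace ℝ n} (ho : A *ᵥ ⇑o = 0)
    (ho₀ : o ≠ 0) {x : EuclideanSpace ℝ n} (hx : ⟪o, x⟫ = 0) :
    μ * ‖x‖ ^ 2 ≤ ⇑x ⬝ᵥ (A *ᵥ ⇑x) := by
  rcases le_or_gt μ 0 with hμ₀ | hμ₀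
  · have := hA.dotProduct_mulVec_nonneg x
    simp only [star_trivial] at this
    nlinarith [sq_nonneg ‖x‖]
  -- Now every eigenvalue but the `i₀`-th is positive, so the kernel vector `o` is a multiple of
  -- the `i₀`-th eigenvector, and `x ⊥ o` makes `x` orthogonal to it.
  set B := hA.1.eigenvectorBasis
  have hBo : ∀ j ≠ i₀, ⟪B j, o⟫ = 0 := fun j hj =>
    hA.1.inner_eigenvectorBasis_eq_zero_of_mulVec_eq_zero ((hμ₀.trans_le (hμ j hj)).ne') ho
  have ho_eq : ⟪B i₀, o⟫ • B i₀ = o := by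
    conv_rhs => rw [← B.sum_repr' o]
    refine (Finset.sum_eq_single_of_mem (f := fun j => ⟪B j, o⟫ • B j) i₀ (mem_univ _)
      fun j _ hj => ?_).symm
    rw [hBo j hj, zero_smul]
  have hc : ⟪B i₀, o⟫ ≠ 0 := fun h => ho₀ (by rw [← ho_eq, h, zero_smul])
  refine hA.1.mul_sq_norm_le_dotProduct_mulVec hμ ?_
  have : ⟪B i₀, o⟫ * ⟪B i₀, x⟫ = 0 := by rw [← real_inner_smul_left, ho_eq, hx]
  exact (mul_eq_zero.mp this).resolve_left hc

end Matrix.PosSemidef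

section CentredIndicator

variable {V : Type*} [Fintype V] [DecidableEq V]

lemma sum_ite_mem_sub_div_card [Nonempty V] (S : Finset V) :
    ∑ v, ((if v ∈ S then (1 : ℝ) else 0) - #S / Fintype.card V) = 0 := by
  have : (Fintype.card V : ℝ) ≠ 0 := by exact_mod_cast Fintype.card_ne_zero
  simp only [sum_sub_distrib, sum_boole, filter_mem_eq_inter, univ_inter, sum_const, card_univ,
    nsmul_eq_mul]
  field_simp
  ring

lemma sum_sq_ite_mem_sub_div_card [Nonempty V] (S : Finset V) :
    ∑ v, ((if v ∈ S then (1 : ℝ) else 0) - #S / Fintype.card V) ^ 2 =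
      #S * (Fintype.card V - #S) / Fintype.card V := by
  have : (Fintype.card V : ℝ) ≠ 0 := by exact_mod_cast Fintype.card_ne_zero
  simp [apply_ite (fun t : ℝ => (t - #S / Fintype.card V) ^ 2), sum_ite, filter_not,
    card_univ_sdiff, Nat.cast_sub (card_le_univ S)]
  field_simp
  ring

end CentredIndicator

namespace SimpleGraph

variable {V : Type*} [Fintype V] [DecidableEq V] (G : SimpleGraph V) [DecidableRel G.Adj]

lemma dotProduct_lapMatrix_mulVec_sub_const (x : V → ℝ) (c : ℝ) :
    (fun v => x v - c) ⬝ᵥ (G.lapMatrix ℝ *ᵥ fun v => x v - c) = x ⬝ᵥ (G.lapMatrix ℝ *ᵥ x) := by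
  simp_rw [← toLinearMap₂'_apply', lapMatrix_toLinearMap₂', sub_sub_sub_cancel_right]

lemma dotProduct_lapMatrix_mulVec_indicator (S : Finset V) :
    (fun v => if v ∈ S then (1 : ℝ) else 0) ⬝ᵥ (G.lapMatrix ℝ *ᵥ fun v => if v ∈ S then 1 else 0) =
      ∑ v ∈ S, (#(G.neighborFinset v \ S) : ℝ) := by
  simp only [dotProduct, ite_mul, one_mul, zero_mul, Finset.sum_ite_mem, univ_inter]
  refine Finset.sum_congr rfl fun v hv => ?_
  rw [lapMatrix_mulVec_apply, if_pos hv, Finset.sum_boole, filter_mem_eq_inter,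
    ← card_neighborFinset_eq_degree, ← card_sdiff_add_card_inter (G.neighborFinset v) S]
  push_cast
  ring

lemma mul_sum_sq_le_dotProduct_lapMatrix_mulVec [Nonempty V] (hL : (G.lapMatrix ℝ).IsHermitian)
    {μ : ℝ} {i₀ : V} (hμ : ∀ j ≠ i₀, μ ≤ hL.eigenvalues j) {x : V → ℝ} (hx : ∑ v, x v = 0) :
    μ * ∑ v, x v ^ 2 ≤ x ⬝ᵥ (G.lapMatrix ℝ *ᵥ x) := by
  have hone : WithLp.toLp 2 (fun _ => (1 : ℝ)) ≠ (0 : EuclideanSpace ℝ V) := by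
    intro h
    simpa using congrArg (fun z : EuclideanSpace ℝ V => z (Classical.arbitrary V)) h
  have := (posSemidef_lapMatrix ℝ G).mul_sq_norm_le_dotProduct_mulVec_of_inner_eq_zero hμ
    (lapMatrix_mulVec_const_eq_zero G) hone (x := WithLp.toLp 2 x)
    (by simpa [PiLp.inner_apply] using hx)
  simpa [EuclideanSpace.norm_sq_eq] using this

lemma sum_card_neighborFinset_sdiff_le_sq {S : Finset V}
    (hS : ∀ v ∈ S, #(G.neighborFinset v \ S) ≤ #(G.neighborFinset v ∩ S) + 1) :
    ∑ v ∈ S, #(G.neighborFinset v \ S) ≤ #S ^ 2 := by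
  have hv : ∀ v ∈ S, #(G.neighborFinset v \ S) ≤ #S := fun v hv => by
    have : G.neighborFinset v ∩ S ⊆ S.erase v := fun u hu => by
      simp only [mem_inter, mem_neighborFinset] at hu
      exact mem_erase.mpr ⟨hu.1.ne', hu.2⟩
    have hin := card_le_card this
    rw [card_erase_of_mem hv] at hin
    have := card_pos.mpr ⟨v, hv⟩
    have := hS v hv
    omega
  calc ∑ v ∈ S, #(G.neighborFinset v \ S) ≤ ∑ _v ∈ S, #S := sum_le_sum hv
    _ = #S ^ 2 := by rw [sum_const, smul_eq_mul, sq]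

end SimpleGraph

lemma mul_div_add_le_of_mul_le_sq {N μ s : ℝ} (hN : 0 < N) (hμ : 0 ≤ μ) (hs : 0 < s)
    (h : μ * (s * (N - s) / N) ≤ s ^ 2) : N * μ / (N + μ) ≤ s := by
  rw [mul_div_assoc', div_le_iff₀ hN] at h
  have : μ * (N - s) ≤ N * s := le_of_mul_le_mul_left (by nlinarith) hs
  rw [div_le_iff₀ (by positivity)]
  linarith

theorem stmt_0 {V : Type*} [Fintype V] [DecidableEq V]
    (G : SimpleGraph V) [DecidableRel G.Adj]
    (n : ℕ) (hn : Fintype.card V = n)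
    (mu : ℝ)
    (hmu : ∃ hL : (G.lapMatrix ℝ).IsHermitian, IsSecondSmallest hL.eigenvalues mu)
    (S : Finset V) (hS : S.Nonempty)
    (hdef : ∀ v ∈ S, (G.neighborFinset v \ S).card ≤ (G.neighborFinset v ∩ S).card + 1)
    :
    ⌈(n : ℝ) * mu / ((n : ℝ) + mu)⌉ ≤ (S.card : ℤ) := by
  obtain ⟨hL, i₀, i₁, -, -, hμ₁, hμ⟩ := hmu
  obtain ⟨v₀, hv₀⟩ := hS
  have : Nonempty V := ⟨v₀⟩
  subst hn
  have hmu₀ : 0 ≤ mu := hμ₁ ▸ (posSemidef_lapMatrix ℝ G).eigenvalues_nonneg i₁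
  have hs : (0 : ℝ) < #S := by exact_mod_cast card_pos.mpr ⟨v₀, hv₀⟩
  have hN : (0 : ℝ) < Fintype.card V := by exact_mod_cast Fintype.card_pos
  set x : V → ℝ := fun v => (if v ∈ S then 1 else 0) - #S / Fintype.card V
  have key : mu * (#S * (Fintype.card V - #S) / Fintype.card V) ≤ (#S : ℝ) ^ 2 := calc
    _ = mu * ∑ v, x v ^ 2 := by rw [sum_sq_ite_mem_sub_div_card]
    _ ≤ x ⬝ᵥ (G.lapMatrix ℝ *ᵥ x) :=
      G.mul_sum_sq_le_dotProduct_lapMatrix_mulVec hL hμ (sum_ite_mem_sub_div_card S)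
    _ = ∑ v ∈ S, (#(G.neighborFinset v \ S) : ℝ) := by
      rw [G.dotProduct_lapMatrix_mulVec_sub_const, G.dotProduct_lapMatrix_mulVec_indicator]
    _ ≤ #S ^ 2 := by exact_mod_cast G.sum_card_neighborFinset_sdiff_le_sq hdef
  exact Int.ceil_le.mpr (by exact_mod_cast mul_div_add_le_of_mul_le_sq hN hmu₀ hs key)
end

section
/- Let Γ be a simple graph of order n and let λ be the spectral radius of Γ (the largest eigenvalue of the adjacency matrix of Γ). Then every global defensive alliance S in Γ satisfies |S| ≥ ⌈n/(λ+2)⌉; in particular the global defensive alliance number satisfies γ_a(Γ) ≥ ⌈n/(λ+2)⌉. -/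
open Finset SimpleGraph

/-! The indicator vector `x` of `S` has `xᵀAx = ∑_{u ∈ S} |N_S(u)|` and `xᵀx = |S|`, so the
Rayleigh bound gives `∑_{u ∈ S} |N_S(u)| ≤ λ|S|`. Domination and the alliance condition give
`n - |S| ≤ ∑_{u ∈ S} |N_{V∖S}(u)| ≤ ∑_{u ∈ S} (|N_S(u)| + 1)`, hence `n ≤ (λ + 2)|S|`; and `λ ≥ 0`
because the adjacency matrix has trace zero. -/

open scoped Matrix ComplexOrder

theorem Matrix.IsHermitian.dotProduct_mulVec_le {𝕜 n : Type*} [RCLike 𝕜] [Fintype n]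
    [DecidableEq n] {A : Matrix n n 𝕜} (hA : A.IsHermitian) {c : ℝ}
    (hc : ∀ i, hA.eigenvalues i ≤ c) (x : n → 𝕜) :
    star x ⬝ᵥ A *ᵥ x ≤ (c : 𝕜) * (star x ⬝ᵥ x) := by
  have hpsd : (algebraMap 𝕜 (Matrix n n 𝕜) c - A).PosSemidef := by
    refine Matrix.posSemidef_iff_isHermitian_and_spectrum_nonneg.mpr
      ⟨(IsSelfAdjoint.algebraMap _ (RCLike.conj_ofReal c)).sub hA, ?_⟩
    rw [← spectrum.singleton_sub_eq, hA.spectrum_eq_image_range]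
    rintro _ ⟨_, rfl, _, ⟨_, ⟨i, rfl⟩, rfl⟩, rfl⟩
    simpa [sub_nonneg] using hc i
  simpa [sub_mulVec, Algebra.algebraMap_eq_smul_one, sub_nonneg, smul_mulVec, dotProduct_smul]
    using hpsd.dotProduct_mulVec_nonneg x

theorem Matrix.IsHermitian.nonneg_of_eigenvalues_le {𝕜 n : Type*} [RCLike 𝕜] [Fintype n]
    [DecidableEq n] [Nonempty n] {A : Matrix n n 𝕜} (hA : A.IsHermitian)
    (htr : 0 ≤ RCLike.re A.trace) {c : ℝ} (hc : ∀ i, hA.eigenvalues i ≤ c) : 0 ≤ c := by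
  have hsum : 0 ≤ ∑ i, hA.eigenvalues i := by
    simpa [hA.trace_eq_sum_eigenvalues] using htr
  have hle : ∑ i, hA.eigenvalues i ≤ Fintype.card n * c := by
    simpa using Finset.sum_le_sum fun i (_ : i ∈ univ) => hc i
  exact nonneg_of_mul_nonneg_right (hsum.trans hle) (by exact_mod_cast Fintype.card_pos)

namespace SimpleGraph

variable {V : Type*} [Fintype V] [DecidableEq V] (G : SimpleGraph V) [DecidableRel G.Adj]

theorem indicator_dotProduct_adjMatrix_mulVec_indicator {α : Type*} [NonAssocSemiring α]
    (S : Finset V) :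
    (S : Set V).indicator 1 ⬝ᵥ G.adjMatrix α *ᵥ (S : Set V).indicator 1
      = ∑ u ∈ S, (#(G.neighborFinset u ∩ S) : α) := by
  simp [dotProduct, adjMatrix_mulVec_apply, Set.indicator_apply, Finset.sum_ite_mem]

theorem card_compl_le_sum_card_neighborFinset_sdiff {S : Finset V}
    (hdom : ∀ v ∉ S, ∃ u ∈ S, G.Adj v u) :
    #Sᶜ ≤ ∑ u ∈ S, #(G.neighborFinset u \ S) := by
  refine (card_le_card fun v hv => ?_).trans card_biUnion_le
  rw [mem_compl] at hv
  obtain ⟨u, hu, hadj⟩ := hdom v hv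
  exact mem_biUnion.mpr ⟨u, hu, by simp [hadj.symm, hv]⟩

theorem card_le_two_mul_card_add_sum_card_neighborFinset_inter {S : Finset V}
    (hdef : ∀ v ∈ S, #(G.neighborFinset v \ S) ≤ #(G.neighborFinset v ∩ S) + 1)
    (hdom : ∀ v ∉ S, ∃ u ∈ S, G.Adj v u) :
    Fintype.card V ≤ 2 * #S + ∑ u ∈ S, #(G.neighborFinset u ∩ S) := by
  have hout := (G.card_compl_le_sum_card_neighborFinset_sdiff hdom).trans (sum_le_sum hdef)
  rw [sum_add_distrib, sum_const, smul_eq_mul, mul_one] at hout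
  rw [← card_add_card_compl S]
  omega

end SimpleGraph

theorem stmt_3_general {V : Type*} [Fintype V] [DecidableEq V]
    (G : SimpleGraph V) [DecidableRel G.Adj]
    (n : ℕ) (hn : Fintype.card V = n)
    (lam : ℝ)
    (hlam : ∃ hA : (G.adjMatrix ℝ).IsHermitian, IsLargest hA.eigenvalues lam)
    (S : Finset V)
    (hdef : ∀ v ∈ S, (G.neighborFinset v \ S).card ≤ (G.neighborFinset v ∩ S).card + 1)
    (hglob : ∀ v ∉ S, ∃ u ∈ S, G.Adj v u)
    :
    ⌈(n : ℝ) / (lam + 2)⌉ ≤ (S.card : ℤ) := by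
  obtain ⟨hA, ⟨v, -⟩, hle⟩ := hlam
  have : Nonempty V := ⟨v⟩
  have hlam0 : 0 ≤ lam := hA.nonneg_of_eigenvalues_le (by simp) hle
  have hedges : ∑ u ∈ S, (#(G.neighborFinset u ∩ S) : ℝ) ≤ lam * #S := by
    simpa [G.indicator_dotProduct_adjMatrix_mulVec_indicator, dotProduct, Set.indicator_apply]
      using hA.dotProduct_mulVec_le hle ((S : Set V).indicator 1)
  have hcount : (n : ℝ) ≤ 2 * #S + ∑ u ∈ S, (#(G.neighborFinset u ∩ S) : ℝ) := by
    exact_mod_cast hn ▸ G.card_le_two_mul_card_add_sum_card_neighborFinset_inter hdef hglob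
  rw [Int.ceil_le, div_le_iff₀ (by linarith)]
  push_cast
  linarith

theorem stmt_3 {V : Type*} [Fintype V] [DecidableEq V]
    (G : SimpleGraph V) [DecidableRel G.Adj]
    (n : ℕ) (hn : Fintype.card V = n)
    (lam : ℝ)
    (hlam : ∃ hA : (G.adjMatrix ℝ).IsHermitian, IsLargest hA.eigenvalues lam)
    (S : Finset V) (hS : S.Nonempty)
    (hdef : ∀ v ∈ S, (G.neighborFinset v \ S).card ≤ (G.neighborFinset v ∩ S).card + 1)
    (hglob : ∀ v ∉ S, ∃ u ∈ S, G.Adj v u)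
    :
    ⌈(n : ℝ) / (lam + 2)⌉ ≤ (S.card : ℤ) :=
  stmt_3_general G n hn lam hlam S hdef hglob
end

section
/- Let Γ be a simple graph of order n with maximum degree Δ. Then every global defensive alliance S in Γ satisfies |S| ≥ ⌈2n/(Δ+3)⌉; in particular the global defensive alliance number satisfies γ_a(Γ) ≥ ⌈2n/(Δ+3)⌉. -/
open Finset SimpleGraph

theorem stmt_5 {V : Type*} [Fintype V] [DecidableEq V]
    (G : SimpleGraph V) [DecidableRel G.Adj]
    (n : ℕ) (hn : Fintype.card V = n)
    (D : ℕ) (hD : G.maxDegree = D)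
    (S : Finset V) (hS : S.Nonempty)
    (hdef : ∀ v ∈ S, (G.neighborFinset v \ S).card ≤ (G.neighborFinset v ∩ S).card + 1)
    (hglob : ∀ v ∉ S, ∃ u ∈ S, G.Adj v u)
    :
    ⌈(2 * (n : ℝ)) / ((D : ℝ) + 3)⌉ ≤ (S.card : ℤ) := by
  -- key natural-number inequality: 2n ≤ |S| * (D+3)
  have hsub : Sᶜ ⊆ S.biUnion (fun v => G.neighborFinset v \ S) := by
    intro u hu
    rw [Finset.mem_compl] at hu
    obtain ⟨v, hvS, hadj⟩ := hglob u hu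
    exact Finset.mem_biUnion.2 ⟨v, hvS, by
      simp [SimpleGraph.mem_neighborFinset, hadj.symm, hu]⟩
  have h1 : Sᶜ.card ≤ ∑ v ∈ S, (G.neighborFinset v \ S).card :=
    (Finset.card_le_card hsub).trans Finset.card_biUnion_le
  have hper : ∀ v ∈ S, 2 * (G.neighborFinset v \ S).card ≤ D + 1 := by
    intro v hv
    have hdeg : (G.neighborFinset v \ S).card + (G.neighborFinset v ∩ S).card
        = G.degree v := by
      rw [Finset.card_sdiff_add_card_inter]; rfl
    have hdle : G.degree v ≤ D := hD ▸ G.degree_le_maxDegree v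
    have := hdef v hv
    omega
  have hsum : 2 * Sᶜ.card ≤ S.card * (D + 1) := by
    calc 2 * Sᶜ.card ≤ 2 * ∑ v ∈ S, (G.neighborFinset v \ S).card := by omega
      _ = ∑ v ∈ S, 2 * (G.neighborFinset v \ S).card := by rw [Finset.mul_sum]
      _ ≤ ∑ v ∈ S, (D + 1) := Finset.sum_le_sum hper
      _ = S.card * (D + 1) := by rw [Finset.sum_const, smul_eq_mul]
  have hcompl : S.card + Sᶜ.card = n := by
    rw [Finset.card_add_card_compl, hn]
  have hkey : 2 * n ≤ S.card * (D + 3) := by nlinarith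
  rw [Int.ceil_le]
  push_cast
  rw [div_le_iff₀ (by positivity)]
  have : (2 * n : ℝ) ≤ (S.card : ℝ) * ((D : ℝ) + 3) := by exact_mod_cast hkey
  linarith
end

section
/- Let Γ be a simple graph of order n with maximum degree Δ. Then every global strong defensive alliance S in Γ satisfies |S| ≥ ⌈n/(⌊Δ/2⌋+1)⌉; in particular the global strong defensive alliance number satisfies γ_â(Γ) ≥ ⌈n/(⌊Δ/2⌋+1)⌉. -/
open Finset SimpleGraph

theorem stmt_6 {V : Type*} [Fintype V] [DecidableEq V]
    (G : SimpleGraph V) [DecidableRel G.Adj]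
    (n : ℕ) (hn : Fintype.card V = n)
    (D : ℕ) (hD : G.maxDegree = D)
    (S : Finset V) (hS : S.Nonempty)
    (hdef : ∀ v ∈ S, (G.neighborFinset v \ S).card ≤ (G.neighborFinset v ∩ S).card)
    (hglob : ∀ v ∉ S, ∃ u ∈ S, G.Adj v u)
    :
    ⌈(n : ℝ) / (((D / 2 : ℕ) : ℝ) + 1)⌉ ≤ (S.card : ℤ) := by
  set d : ℕ := D / 2 with hd
  have key : n ≤ S.card * (d + 1) := by
    have hcov : (Finset.univ : Finset V) ⊆
        S ∪ S.biUnion (fun v => G.neighborFinset v \ S) := by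
      intro u _
      by_cases hu : u ∈ S
      · exact Finset.mem_union_left _ hu
      · obtain ⟨v, hv, hadj⟩ := hglob u hu
        refine Finset.mem_union_right _ (Finset.mem_biUnion.2 ⟨v, hv, ?_⟩)
        simp [SimpleGraph.mem_neighborFinset, hadj.symm, hu]
    have hbound : ∀ v ∈ S, (G.neighborFinset v \ S).card ≤ d := by
      intro v hv
      have hdeg : (G.neighborFinset v \ S).card + (G.neighborFinset v ∩ S).card
          = G.degree v := by
        rw [Finset.card_sdiff_add_card_inter]; rfl
      have hle : G.degree v ≤ D := hD ▸ G.degree_le_maxDegree v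
      have := hdef v hv
      omega
    calc n = (Finset.univ : Finset V).card := by rw [← hn]; rfl
    _ ≤ (S ∪ S.biUnion (fun v => G.neighborFinset v \ S)).card :=
        Finset.card_le_card hcov
    _ ≤ S.card + (S.biUnion (fun v => G.neighborFinset v \ S)).card :=
        Finset.card_union_le _ _
    _ ≤ S.card + ∑ v ∈ S, (G.neighborFinset v \ S).card := by
        gcongr; exact Finset.card_biUnion_le
    _ ≤ S.card + ∑ v ∈ S, d := by
        gcongr with v hv; exact hbound v hv
    _ = S.card * (d + 1) := by rw [Finset.sum_const, smul_eq_mul]; ring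
  rw [Int.ceil_le, div_le_iff₀ (by positivity)]
  push_cast
  calc (n : ℝ) ≤ S.card * (d + 1) := by exact_mod_cast key
  _ = S.card * ((d : ℝ) + 1) := by push_cast; ring
end

section
/- Let Γ be a simple connected 5-regular graph of order n, and let μ be the algebraic connectivity of Γ (the second smallest eigenvalue of the Laplacian matrix of Γ). Then the girth of Γ satisfies girth(Γ) ≥ ⌈nμ/(n+μ)⌉. -/
open Finset SimpleGraph

open Matrix

/-!
Let `S` be the vertex set of a shortest cycle, `g = |S|`. Each vertex of `S` has two neighbours on
the cycle, so in a 5-regular graph at most `3g` edges leave `S`. Testing the Laplacian against the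
indicator of `S` made orthogonal to the constants gives Fiedler's cut bound
`μ g (n - g) ≤ n e(S, Sᶜ) ≤ 3 g n`, i.e. `μ (n - g) ≤ 3n ≤ g n`, which rearranges to
`n μ / (n + μ) ≤ g`.
-/

namespace Matrix.IsHermitian
variable {n : Type*} [Fintype n] {A : Matrix n n ℝ}

theorem dotProduct_mulVec_comm (hA : A.IsHermitian) (x y : n → ℝ) :
    x ⬝ᵥ (A *ᵥ y) = (A *ᵥ x) ⬝ᵥ y := by
  rw [dotProduct_mulVec, ← mulVec_transpose, ← conjTranspose_eq_transpose_of_trivial, hA,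
    dotProduct_comm]

variable [DecidableEq n]

theorem dotProduct_self_eq_sum_sq (hA : A.IsHermitian) (x : n → ℝ) :
    x ⬝ᵥ x = ∑ j, (x ⬝ᵥ hA.eigenvectorBasis j) ^ 2 := by
  have h := hA.eigenvectorBasis.sum_inner_mul_inner (WithLp.toLp 2 x) (WithLp.toLp 2 x)
  simp only [EuclideanSpace.inner_eq_star_dotProduct, star_trivial] at h
  simp only [← h, dotProduct_comm x, sq]

theorem dotProduct_mulVec_self_eq_sum (hA : A.IsHermitian) (x : n → ℝ) :
    x ⬝ᵥ (A *ᵥ x) = ∑ j, hA.eigenvalues j * (x ⬝ᵥ hA.eigenvectorBasis j) ^ 2 := by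
  have h := hA.eigenvectorBasis.sum_inner_mul_inner (WithLp.toLp 2 x) (WithLp.toLp 2 (A *ᵥ x))
  simp only [EuclideanSpace.inner_eq_star_dotProduct, star_trivial] at h
  rw [dotProduct_comm, ← h]
  refine Finset.sum_congr rfl fun j _ => ?_
  rw [dotProduct_comm, ← hA.dotProduct_mulVec_comm, hA.mulVec_eigenvectorBasis, dotProduct_smul,
    smul_eq_mul, dotProduct_comm]
  ring

theorem mul_dotProduct_self_le (hA : A.IsHermitian) {i₀ : n} {μ : ℝ}
    (hμ : ∀ j ≠ i₀, μ ≤ hA.eigenvalues j) {x : n → ℝ}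
    (hx : x ⬝ᵥ hA.eigenvectorBasis i₀ = 0) :
    μ * (x ⬝ᵥ x) ≤ x ⬝ᵥ (A *ᵥ x) := by
  rw [hA.dotProduct_self_eq_sum_sq, hA.dotProduct_mulVec_self_eq_sum, Finset.mul_sum]
  refine Finset.sum_le_sum fun j _ => ?_
  rcases eq_or_ne j i₀ with rfl | hj
  · simp [hx]
  · exact mul_le_mul_of_nonneg_right (hμ j hj) (sq_nonneg _)

theorem mul_dotProduct_self_le_of_mulVec_eq_zero (hA : A.IsHermitian) {i₀ : n} {μ : ℝ}
    (hμ : ∀ j ≠ i₀, μ ≤ hA.eigenvalues j) (hμ₀ : 0 < μ) {v : n → ℝ} (hAv : A *ᵥ v = 0)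
    (hv : v ≠ 0) {x : n → ℝ} (hxv : x ⬝ᵥ v = 0) :
    μ * (x ⬝ᵥ x) ≤ x ⬝ᵥ (A *ᵥ x) := by
  set b : n → ℝ := ⇑(hA.eigenvectorBasis i₀)
  have hvv : 0 ≤ v ⬝ᵥ v := by simpa using dotProduct_self_star_nonneg v
  have hvb : v ⬝ᵥ b ≠ 0 := by
    intro hvb
    have := hA.mul_dotProduct_self_le hμ hvb
    rw [hAv, dotProduct_zero] at this
    exact hv (dotProduct_self_eq_zero.mp (by nlinarith))
  -- shifting `x` along the null vector `v` makes it orthogonal to `b` without changing `xᵀAx`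
  set y := x - ((x ⬝ᵥ b) / (v ⬝ᵥ b)) • v
  have hyb : y ⬝ᵥ b = 0 := by
    simp only [y, sub_dotProduct, smul_dotProduct, smul_eq_mul]
    field_simp
    ring
  have hyAy : y ⬝ᵥ (A *ᵥ y) = x ⬝ᵥ (A *ᵥ x) := by
    simp only [y, mulVec_sub, mulVec_smul, hAv, smul_zero, sub_zero, sub_dotProduct,
      smul_dotProduct, hA.dotProduct_mulVec_comm v, zero_dotProduct, smul_zero]
  have hyy : x ⬝ᵥ x ≤ y ⬝ᵥ y := by
    simp only [y, sub_dotProduct, dotProduct_sub, smul_dotProduct, dotProduct_smul, hxv,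
      dotProduct_comm v x, smul_eq_mul]
    nlinarith [mul_nonneg (sq_nonneg (x ⬝ᵥ b / v ⬝ᵥ b)) hvv]
  calc μ * (x ⬝ᵥ x) ≤ μ * (y ⬝ᵥ y) := by gcongr
    _ ≤ x ⬝ᵥ (A *ᵥ x) := hyAy ▸ hA.mul_dotProduct_self_le hμ hyb

end Matrix.IsHermitian

namespace SimpleGraph
variable {V : Type*} (G : SimpleGraph V) [DecidableRel G.Adj]

theorem card_interedges_eq_sum {R : Type*} [AddCommMonoidWithOne R] (s t : Finset V) :
    (#(G.interedges s t) : R) = ∑ i ∈ s, ∑ j ∈ t, if G.Adj i j then 1 else 0 := by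
  rw [← sum_product' (f := fun i j => if G.Adj i j then (1 : R) else 0), sum_boole]
  rfl

theorem card_interedges_comm (s t : Finset V) : #(G.interedges s t) = #(G.interedges t s) :=
  have : Std.Symm G.Adj := ⟨fun _ _ h => h.symm⟩
  Rel.card_interedges_comm s t

end SimpleGraph

-- `|V| • 𝟙_S - |S| • 1`: the indicator of `S` projected orthogonally to the constants, scaled by
-- `|V|` to avoid division.
def Finset.centeredIndicator {V : Type*} [Fintype V] [DecidableEq V] (S : Finset V) : V → ℝ :=
  fun v => if v ∈ S then (#Sᶜ : ℝ) else -(#S : ℝ)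

namespace Finset
variable {V : Type*} [Fintype V] [DecidableEq V] (S : Finset V)

theorem centeredIndicator_of_mem {v : V} (hv : v ∈ S) : S.centeredIndicator v = #Sᶜ := if_pos hv

theorem centeredIndicator_of_mem_compl {v : V} (hv : v ∈ Sᶜ) : S.centeredIndicator v = -#S :=
  if_neg (mem_compl.1 hv)

theorem sum_comp_centeredIndicator (f : ℝ → ℝ) :
    ∑ v, f (S.centeredIndicator v) = #S * f #Sᶜ + #Sᶜ * f (-#S) := by
  rw [← sum_add_sum_compl S]
  simp +contextual [centeredIndicator_of_mem, centeredIndicator_of_mem_compl]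

theorem centeredIndicator_dotProduct_one : S.centeredIndicator ⬝ᵥ (fun _ => 1) = 0 := by
  simp only [dotProduct, mul_one]
  rw [sum_comp_centeredIndicator S (fun t => t)]
  ring

theorem centeredIndicator_dotProduct_self :
    S.centeredIndicator ⬝ᵥ S.centeredIndicator = #S * #Sᶜ * Fintype.card V := by
  simp only [dotProduct]
  rw [sum_comp_centeredIndicator S (fun t => t * t), ← card_add_card_compl S]
  push_cast
  ring

end Finset

namespace SimpleGraph
variable {V : Type*} [Fintype V] [DecidableEq V] (G : SimpleGraph V) [DecidableRel G.Adj]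

theorem centeredIndicator_dotProduct_lapMatrix_mulVec (S : Finset V) :
    S.centeredIndicator ⬝ᵥ (G.lapMatrix ℝ *ᵥ S.centeredIndicator) =
      Fintype.card V ^ 2 * #(G.interedges S Sᶜ) := by
  rw [← toLinearMap₂'_apply', lapMatrix_toLinearMap₂']
  simp only [← sum_add_sum_compl S]
  simp +contextual only [centeredIndicator_of_mem, centeredIndicator_of_mem_compl,
    ← mul_boole _ (_ ^ 2)]
  simp only [sum_add_distrib, ← mul_sum, ← card_interedges_eq_sum, ← card_add_card_compl S,
    G.card_interedges_comm Sᶜ S]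
  push_cast
  ring

theorem mul_card_mul_card_compl_le (hL : (G.lapMatrix ℝ).IsHermitian) {i₀ : V} {μ : ℝ}
    (hμ : ∀ j ≠ i₀, μ ≤ hL.eigenvalues j) (S : Finset V) :
    μ * (#S * #Sᶜ) ≤ Fintype.card V * #(G.interedges S Sᶜ) := by
  rcases le_or_gt μ 0 with hμ₀ | hμ₀
  · exact (mul_nonpos_of_nonpos_of_nonneg hμ₀ (by positivity)).trans (by positivity)
  have hn : (0 : ℝ) < Fintype.card V := by exact_mod_cast Fintype.card_pos_iff.2 ⟨i₀⟩
  have h := hL.mul_dotProduct_self_le_of_mulVec_eq_zero hμ hμ₀ G.lapMatrix_mulVec_const_eq_zero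
    (fun h => one_ne_zero (congr_fun h i₀)) S.centeredIndicator_dotProduct_one
  rw [S.centeredIndicator_dotProduct_self, G.centeredIndicator_dotProduct_lapMatrix_mulVec] at h
  nlinarith

namespace IsRegularOfDegree
variable {G} {d : ℕ} (hG : G.IsRegularOfDegree d)
include hG

theorem card_interedges_self_add_card_interedges_compl (S : Finset V) :
    #(G.interedges S S) + #(G.interedges S Sᶜ) = d * #S := by
  rw [← Nat.cast_id (#(G.interedges S S)), ← Nat.cast_id (#(G.interedges S Sᶜ)),
    card_interedges_eq_sum, card_interedges_eq_sum, ← sum_add_distrib]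
  simp only [sum_add_sum_compl, ← degree_eq_sum_if_adj, Nat.cast_id, hG.degree_eq, sum_const,
    smul_eq_mul, mul_comm]

theorem card_interedges_compl_le {k : ℕ} {S : Finset V}
    (hS : ∀ v ∈ S, k ≤ #{u ∈ S | G.Adj v u}) : #(G.interedges S Sᶜ) ≤ (d - k) * #S := by
  have h₁ := hG.card_interedges_self_add_card_interedges_compl S
  have h₂ : k * #S ≤ #(G.interedges S S) := by
    rw [← Nat.cast_id #(G.interedges S S), card_interedges_eq_sum, mul_comm, ← smul_eq_mul,
      ← sum_const]
    refine sum_le_sum fun v hv => ?_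
    rw [sum_boole, Nat.cast_id]
    exact hS v hv
  rw [Nat.sub_mul]
  omega

theorem mul_card_compl_le (hL : (G.lapMatrix ℝ).IsHermitian) {i₀ : V} {μ : ℝ}
    (hμ : ∀ j ≠ i₀, μ ≤ hL.eigenvalues j) {k : ℕ} {S : Finset V} (hS₀ : S.Nonempty)
    (hS : ∀ v ∈ S, k ≤ #{u ∈ S | G.Adj v u}) :
    μ * #Sᶜ ≤ (d - k : ℕ) * Fintype.card V := by
  have hfiedler := G.mul_card_mul_card_compl_le hL hμ S
  have hcut : (#(G.interedges S Sᶜ) : ℝ) ≤ (d - k : ℕ) * #S := by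
    exact_mod_cast hG.card_interedges_compl_le hS
  have hS_pos : (0 : ℝ) < #S := by exact_mod_cast hS₀.card_pos
  refine le_of_mul_le_mul_left ?_ hS_pos
  nlinarith [mul_le_mul_of_nonneg_left hcut (Nat.cast_nonneg (Fintype.card V))]

end IsRegularOfDegree

end SimpleGraph

namespace SimpleGraph.Walk.IsCycle
variable {V : Type*} [DecidableEq V] {G : SimpleGraph V} {u : V} {w : G.Walk u u}

theorem card_support_toFinset (hw : w.IsCycle) :
    #w.support.toFinset = w.length := by
  rw [← w.cons_tail_support, List.toFinset_cons, insert_eq_of_mem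
    (List.mem_toFinset.2 (w.end_mem_tail_support hw.not_nil)),
    List.toFinset_card_of_nodup hw.support_nodup, List.length_tail, w.length_support]
  rfl

theorem two_le_card_filter_adj [DecidableRel G.Adj] (hw : w.IsCycle) {v : V}
    (hv : v ∈ w.support.toFinset) : 2 ≤ #{x ∈ w.support.toFinset | G.Adj v x} := by
  rw [← hw.ncard_neighborSet_toSubgraph_eq_two (List.mem_toFinset.1 hv), ← Set.ncard_coe_finset]
  refine Set.ncard_le_ncard (fun x hx => ?_) (Finset.finite_toSet _)
  simp only [coe_filter, List.mem_toFinset, Set.mem_ofPred_eq]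
  exact ⟨Walk.mem_support_of_adj_toSubgraph hx.symm, hx.adj_sub⟩

end SimpleGraph.Walk.IsCycle

theorem stmt_9_general {V : Type*} [Fintype V] [DecidableEq V]
    (G : SimpleGraph V) [DecidableRel G.Adj]
    (n : ℕ) (hn : Fintype.card V = n)
    (hreg : G.IsRegularOfDegree 5)
    (mu : ℝ) (hmu : ∃ hL : (G.lapMatrix ℝ).IsHermitian, IsSecondSmallest hL.eigenvalues mu)
    :
    ((⌈(n : ℝ) * mu / ((n : ℝ) + mu)⌉.toNat : ℕ∞) ≤ G.egirth) := by
  obtain ⟨hL, i₀, i₁, -, -, hμ₁, hμ⟩ := hmu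
  have hμ₀ : 0 ≤ mu := hμ₁ ▸ (G.posSemidef_lapMatrix ℝ).eigenvalues_nonneg i₁
  refine le_egirth.2 fun u w hw => ?_
  set S := w.support.toFinset
  have hS : #S = w.length := hw.card_support_toFinset
  have hg : (3 : ℝ) ≤ #S := by exact_mod_cast hS ▸ hw.three_le_length
  have hn' : (#S + #Sᶜ : ℝ) = n := by exact_mod_cast (card_add_card_compl S).trans hn
  have hμS : mu * #Sᶜ ≤ 3 * n := by
    have := hreg.mul_card_compl_le hL hμ ⟨u, List.mem_toFinset.2 w.start_mem_support⟩
      fun v => hw.two_le_card_filter_adj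
    simpa [hn] using this
  have hgirth : (n : ℝ) * mu / (n + mu) ≤ #S := by
    rw [div_le_iff₀ (by linarith [(#Sᶜ).cast_nonneg (α := ℝ)]), ← hn']
    nlinarith [mul_le_mul_of_nonneg_right hg (by positivity : (0 : ℝ) ≤ #S + #Sᶜ)]
  rw [← hS]
  exact_mod_cast Int.toNat_le.2 (Int.ceil_le.2 (by exact_mod_cast hgirth))

theorem stmt_9 {V : Type*} [Fintype V] [DecidableEq V]
    (G : SimpleGraph V) [DecidableRel G.Adj]
    (n : ℕ) (hn : Fintype.card V = n)
    (hconn : G.Connected)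
    (hreg : G.IsRegularOfDegree 5)
    (mu : ℝ) (hmu : ∃ hL : (G.lapMatrix ℝ).IsHermitian, IsSecondSmallest hL.eigenvalues mu)
    :
    ((⌈(n : ℝ) * mu / ((n : ℝ) + mu)⌉.toNat : ℕ∞) ≤ G.egirth) :=
  stmt_9_general G n hn hreg mu hmu
end

section
/- Let Γ be a simple graph of order n, size m, and maximum degree Δ. Then every global offensive alliance S in Γ satisfies |S| ≥ ⌈((2n+Δ+1) − √((2n+Δ+1)² − 8(2m+n)))/4⌉; in particular the global offensive alliance number satisfies γ_{a_o}(Γ) ≥ ⌈((2n+Δ+1) − √((2n+Δ+1)² − 8(2m+n)))/4⌉. -/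
open Finset SimpleGraph

theorem stmt_12 {V : Type*} [Fintype V] [DecidableEq V]
    (G : SimpleGraph V) [DecidableRel G.Adj]
    (n : ℕ) (hn : Fintype.card V = n)
    (m : ℕ) (hm : G.edgeFinset.card = m)
    (D : ℕ) (hD : G.maxDegree = D)
    (S : Finset V) (hS : S.Nonempty)
    (hoff : ∀ v ∉ S, (G.neighborFinset v \ S).card + 1 ≤ (G.neighborFinset v ∩ S).card)
    :
    ⌈((2 * (n : ℝ) + D + 1) - Real.sqrt ((2 * (n : ℝ) + D + 1) ^ 2 - 8 * (2 * (m : ℝ) + n))) / 4⌉ ≤ (S.card : ℤ) := by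
  set s := S.card with hs
  -- combinatorial key inequality : 2m + n + 2s^2 ≤ (2n + D + 1) s
  have hdegS : ∀ v ∈ S, G.degree v ≤ D := by
    intro v _; rw [← hD]; exact G.degree_le_maxDegree v
  have hdegC : ∀ v ∈ Sᶜ, G.degree v + 1 ≤ 2 * s := by
    intro v hv
    rw [Finset.mem_compl] at hv
    have h1 := hoff v hv
    have h2 : (G.neighborFinset v ∩ S).card + (G.neighborFinset v \ S).card
        = G.degree v := by
      rw [Finset.card_inter_add_card_sdiff]; rfl
    have h3 : (G.neighborFinset v ∩ S).card ≤ s :=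
      Finset.card_le_card (Finset.inter_subset_right)
    omega
  have hsum : ∑ v, G.degree v = 2 * m := by
    rw [← hm]; exact G.sum_degrees_eq_twice_card_edges
  have hsplit : ∑ v ∈ S, G.degree v + ∑ v ∈ Sᶜ, G.degree v = 2 * m := by
    rw [Finset.sum_add_sum_compl]; exact hsum
  have hb1 : ∑ v ∈ S, G.degree v ≤ s * D := by
    calc ∑ v ∈ S, G.degree v ≤ ∑ _v ∈ S, D := Finset.sum_le_sum hdegS
    _ = s * D := by rw [Finset.sum_const, smul_eq_mul]
  have hb2 : ∑ v ∈ Sᶜ, (G.degree v + 1) ≤ Sᶜ.card * (2 * s) := by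
    calc ∑ v ∈ Sᶜ, (G.degree v + 1) ≤ ∑ _v ∈ Sᶜ, 2 * s := Finset.sum_le_sum hdegC
    _ = Sᶜ.card * (2 * s) := by rw [Finset.sum_const, smul_eq_mul]
  have hb2' : ∑ v ∈ Sᶜ, G.degree v + Sᶜ.card ≤ Sᶜ.card * (2 * s) := by
    rw [Finset.sum_add_distrib, Finset.sum_const, smul_eq_mul, mul_one] at hb2
    exact hb2
  have hcard : s + Sᶜ.card = n := by
    have := Finset.card_le_univ S
    rw [← hn, hs, Finset.card_compl]
    omega
  have key : 2 * m + n + 2 * s ^ 2 ≤ (2 * n + D + 1) * s := by nlinarith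
  -- real arithmetic part
  set B : ℝ := 2 * (n : ℝ) + D + 1 with hB
  set C : ℝ := 2 * (m : ℝ) + n with hC
  have hkeyR : 2 * (s : ℝ) ^ 2 - B * s + C ≤ 0 := by
    have := (Nat.cast_le (α := ℝ)).mpr key
    push_cast at this
    rw [hB, hC]; nlinarith
  have hsq : (B - 4 * s) ^ 2 ≤ B ^ 2 - 8 * C := by nlinarith
  have hnonneg : (0:ℝ) ≤ B ^ 2 - 8 * C := le_trans (sq_nonneg _) hsq
  have hsqrt : B - 4 * s ≤ Real.sqrt (B ^ 2 - 8 * C) := by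
    calc B - 4 * s ≤ |B - 4 * s| := le_abs_self _
    _ = Real.sqrt ((B - 4 * s) ^ 2) := (Real.sqrt_sq_eq_abs _).symm
    _ ≤ Real.sqrt (B ^ 2 - 8 * C) := Real.sqrt_le_sqrt hsq
  rw [Int.ceil_le]
  push_cast
  linarith
end

section
/- Let Γ be a simple graph of order n, size m, and maximum degree Δ. Then every global strong offensive alliance S in Γ satisfies |S| ≥ ⌈((2n+Δ+2) − √((2n+Δ+2)² − 16(m+n)))/4⌉; in particular the global strong offensive alliance number satisfies γ_{â_o}(Γ) ≥ ⌈((2n+Δ+2) − √((2n+Δ+2)² − 16(m+n)))/4⌉. -/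
open Finset SimpleGraph

theorem stmt_13 {V : Type*} [Fintype V] [DecidableEq V]
    (G : SimpleGraph V) [DecidableRel G.Adj]
    (n : ℕ) (hn : Fintype.card V = n)
    (m : ℕ) (hm : G.edgeFinset.card = m)
    (D : ℕ) (hD : G.maxDegree = D)
    (S : Finset V) (hS : S.Nonempty)
    (hoff : ∀ v ∉ S, (G.neighborFinset v \ S).card + 2 ≤ (G.neighborFinset v ∩ S).card)
    :
    ⌈((2 * (n : ℝ) + D + 2) - Real.sqrt ((2 * (n : ℝ) + D + 2) ^ 2 - 16 * ((m : ℝ) + n))) / 4⌉ ≤ (S.card : ℤ) := by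
  classical
  set s : ℕ := S.card with hs
  have hsn : s ≤ n := by rw [← hn]; exact Finset.card_le_univ S
  have hdeg2 : ∀ v ∈ Sᶜ, G.degree v + 2 ≤ 2 * s := by
    intro v hv
    have hv' : v ∉ S := by simpa using hv
    have h1 := hoff v hv'
    have h2 : (G.neighborFinset v ∩ S).card ≤ s :=
      Finset.card_le_card Finset.inter_subset_right
    have h3 : (G.neighborFinset v ∩ S).card + (G.neighborFinset v \ S).card
        = G.degree v := by
      rw [Finset.card_inter_add_card_sdiff]; rfl
    omega
  have hsum2 : ∑ v ∈ Sᶜ, (G.degree v + 2) ≤ 2 * s * Sᶜ.card := by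
    calc ∑ v ∈ Sᶜ, (G.degree v + 2) ≤ ∑ _v ∈ Sᶜ, 2 * s := Finset.sum_le_sum hdeg2
      _ = 2 * s * Sᶜ.card := by rw [Finset.sum_const, smul_eq_mul, mul_comm]
  have hsplit : ∑ v ∈ Sᶜ, (G.degree v + 2) = ∑ v ∈ Sᶜ, G.degree v + 2 * Sᶜ.card := by
    rw [Finset.sum_add_distrib, Finset.sum_const, smul_eq_mul, mul_comm]
  have hsum1 : ∑ v ∈ S, G.degree v ≤ s * D := by
    calc ∑ v ∈ S, G.degree v ≤ ∑ _v ∈ S, D := by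
          refine Finset.sum_le_sum fun v _ => ?_
          rw [← hD]; exact G.degree_le_maxDegree v
      _ = s * D := by rw [Finset.sum_const, smul_eq_mul]
  have htot : ∑ v ∈ S, G.degree v + ∑ v ∈ Sᶜ, G.degree v = 2 * m := by
    rw [Finset.sum_add_sum_compl, ← hm, SimpleGraph.sum_degrees_eq_twice_card_edges]
  have hcompl : Sᶜ.card = n - s := by rw [Finset.card_compl, hn, hs]
  have hcR : (Sᶜ.card : ℝ) = (n : ℝ) - s := by
    rw [hcompl, Nat.cast_sub hsn]
  have A : (∑ v ∈ Sᶜ, G.degree v : ℝ) + 2 * ((n : ℝ) - s) ≤ 2 * s * ((n : ℝ) - s) := by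
    rw [hsplit] at hsum2
    have h' : (∑ v ∈ Sᶜ, G.degree v : ℝ) + 2 * (Sᶜ.card : ℝ) ≤ 2 * s * (Sᶜ.card : ℝ) := by
      exact_mod_cast hsum2
    rw [hcR] at h'; exact h'
  have Bh : (∑ v ∈ S, G.degree v : ℝ) ≤ (s : ℝ) * D := by exact_mod_cast hsum1
  have Ch : (∑ v ∈ S, G.degree v : ℝ) + (∑ v ∈ Sᶜ, G.degree v : ℝ) = 2 * m := by
    exact_mod_cast htot
  set B : ℝ := 2 * (n : ℝ) + D + 2 with hB
  set C : ℝ := B ^ 2 - 16 * ((m : ℝ) + n) with hC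
  have hquad : (4 * (s : ℝ) - B) ^ 2 ≤ C := by
    rw [hC, hB]; nlinarith [A, Bh, Ch]
  have hC0 : 0 ≤ C := le_trans (sq_nonneg _) hquad
  set r : ℝ := Real.sqrt C with hr
  have hr0 : 0 ≤ r := Real.sqrt_nonneg C
  have hr2 : r ^ 2 = C := Real.sq_sqrt hC0
  have hmain : B - 4 * (s : ℝ) ≤ r := by
    rcases le_or_gt (B - 4 * (s : ℝ)) 0 with h | h
    · linarith
    · nlinarith [hquad, hr2, hr0]
  rw [Int.ceil_le]
  push_cast
  linarith
end

section
/- Let Γ be a simple graph of order n and size m, and let λ be the spectral radius of Γ (the largest eigenvalue of the adjacency matrix of Γ). Then every global dual alliance S in Γ satisfies |S| ≥ ⌈(2m+n)/(4(λ+1))⌉; in particular the global dual alliance number satisfies γ_{a_d}(Γ) ≥ ⌈(2m+n)/(4(λ+1))⌉. -/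
/-!
Let `t = ∑_{v ∈ S} |N_S(v)|` be the quadratic form of the adjacency matrix at the indicator vector
of `S`, so `t ≤ λ |S|` by the Rayleigh bound. Writing `deg v = |N_S(v)| + |N_{V∖S}(v)|`, the
defensive condition gives `deg v ≤ 2 |N_S(v)| + 1` on `S` and the offensive one
`deg v + 1 ≤ 2 |N_S(v)|` off `S`. Summing `deg v + 1` over all vertices and double counting
`∑_v |N_S(v)| = ∑_{u ∈ S} deg u ≤ 2t + |S|` yields `2m + n ≤ 4t + 4|S| ≤ 4(λ + 1)|S|`.
-/

open Finset SimpleGraph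

open Matrix

open scoped ComplexOrder

theorem Int.ceil_div_le_of_le_mul {α : Type*} [Field α] [LinearOrder α] [IsStrictOrderedRing α]
    [FloorRing α] {a b : α} {k : ℤ} (ha : 0 ≤ a) (hk : 0 ≤ k) (h : a ≤ k * b) :
    ⌈a / b⌉ ≤ k := by
  rw [Int.ceil_le]
  rcases le_or_gt b 0 with hb | hb
  · exact (div_nonpos_of_nonneg_of_nonpos ha hb).trans (by exact_mod_cast hk)
  · rwa [div_le_iff₀ hb]

namespace Matrix.IsHermitian

theorem posSemidef_smul_one_sub {n 𝕜 : Type*} [Fintype n] [DecidableEq n] [RCLike 𝕜]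
    {A : Matrix n n 𝕜} (hA : A.IsHermitian) {lam : ℝ} (hlam : ∀ i, hA.eigenvalues i ≤ lam) :
    ((lam : 𝕜) • 1 - A).PosSemidef := by
  have hspec := hA.spectral_theorem
  set U := hA.eigenvectorUnitary
  set e := hA.eigenvalues
  have hconj : (lam : 𝕜) • 1 - A
      = Unitary.conjStarAlgAut 𝕜 _ U ((lam : 𝕜) • 1 - diagonal (RCLike.ofReal ∘ e)) := by
    rw [map_sub, map_smul, map_one, ← hspec]
  rw [hconj, Unitary.conjStarAlgAut_apply, Unitary.isUnit_coe.posSemidef_star_right_conjugate_iff,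
    smul_one_eq_diagonal, diagonal_sub, posSemidef_diagonal_iff]
  intro i
  simpa using hlam i

theorem dotProduct_mulVec_le_s14 {n : Type*} [Fintype n] [DecidableEq n] {A : Matrix n n ℝ}
    (hA : A.IsHermitian) {lam : ℝ} (hlam : ∀ i, hA.eigenvalues i ≤ lam) (x : n → ℝ) :
    x ⬝ᵥ (A *ᵥ x) ≤ lam * (x ⬝ᵥ x) := by
  have := (hA.posSemidef_smul_one_sub hlam).dotProduct_mulVec_nonneg x
  simp only [star_trivial, RCLike.ofReal_real_eq_id, id, sub_mulVec, smul_mulVec, one_mulVec,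
    dotProduct_sub, dotProduct_smul, smul_eq_mul] at this
  linarith

end Matrix.IsHermitian

namespace SimpleGraph

variable {V : Type*} [Fintype V] [DecidableEq V] (G : SimpleGraph V) [DecidableRel G.Adj]
  (S : Finset V)

theorem sum_card_neighborFinset_inter_le_mul_card (hA : (G.adjMatrix ℝ).IsHermitian) {lam : ℝ}
    (hlam : ∀ i, hA.eigenvalues i ≤ lam) :
    ((∑ v ∈ S, #(G.neighborFinset v ∩ S) : ℕ) : ℝ) ≤ lam * #S := by
  set x : V → ℝ := fun v => if v ∈ S then 1 else 0
  have hquad : x ⬝ᵥ (G.adjMatrix ℝ *ᵥ x) = ∑ v ∈ S, #(G.neighborFinset v ∩ S) := by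
    simp [x, dotProduct, adjMatrix_mulVec_apply, sum_ite_mem]
  have hnorm : x ⬝ᵥ x = #S := by simp [x, dotProduct]
  push_cast
  simpa [hquad, hnorm] using hA.dotProduct_mulVec_le_s14 hlam x

theorem sum_card_neighborFinset_inter_eq_sum_degree :
    ∑ v, #(G.neighborFinset v ∩ S) = ∑ u ∈ S, G.degree u := by
  convert sum_card_bipartiteAbove_eq_sum_card_bipartiteBelow G.Adj (s := univ) (t := S)
    using 3 with v _ u _
  · ext; simp [bipartiteAbove, and_comm]
  · rw [← card_neighborFinset_eq_degree]; congr 1; ext; simp [bipartiteBelow, G.adj_comm]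

theorem degree_eq_card_inter_add_card_sdiff (v : V) :
    G.degree v = #(G.neighborFinset v ∩ S) + #(G.neighborFinset v \ S) := by
  rw [← card_neighborFinset_eq_degree, card_inter_add_card_sdiff]

variable {G S}

theorem sum_degree_le_of_defensive
    (hdef : ∀ v ∈ S, #(G.neighborFinset v \ S) ≤ #(G.neighborFinset v ∩ S) + 1) :
    ∑ u ∈ S, G.degree u ≤ 2 * ∑ u ∈ S, #(G.neighborFinset u ∩ S) + #S := by
  calc ∑ u ∈ S, G.degree u ≤ ∑ u ∈ S, (2 * #(G.neighborFinset u ∩ S) + 1) :=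
        sum_le_sum fun u hu => by
          have := hdef u hu
          rw [G.degree_eq_card_inter_add_card_sdiff S]
          omega
    _ = 2 * ∑ u ∈ S, #(G.neighborFinset u ∩ S) + #S := by
        rw [sum_add_distrib, ← mul_sum, card_eq_sum_ones]

theorem two_mul_card_edgeFinset_add_card_le
    (hdef : ∀ v ∈ S, #(G.neighborFinset v \ S) ≤ #(G.neighborFinset v ∩ S) + 1)
    (hoff : ∀ v ∉ S, #(G.neighborFinset v \ S) + 1 ≤ #(G.neighborFinset v ∩ S)) :
    2 * #G.edgeFinset + Fintype.card V ≤ 2 * ∑ v, #(G.neighborFinset v ∩ S) + 2 * #S := by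
  have hvertex : ∀ v, G.degree v + 1
      ≤ 2 * #(G.neighborFinset v ∩ S) + 2 * (if v ∈ S then 1 else 0) := fun v => by
    rw [G.degree_eq_card_inter_add_card_sdiff S]
    by_cases hv : v ∈ S
    · have := hdef v hv
      simp only [hv, if_true]
      omega
    · have := hoff v hv
      simp only [hv, if_false]
      omega
  have hsum := sum_le_sum fun v (_ : v ∈ univ) => hvertex v
  rwa [sum_add_distrib, sum_degrees_eq_twice_card_edges, sum_const, card_univ, smul_eq_mul,
    mul_one, sum_add_distrib, ← mul_sum, ← mul_sum, sum_boole, filter_mem_eq_inter, univ_inter,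
    Nat.cast_id] at hsum

end SimpleGraph

theorem stmt_14_general {V : Type*} [Fintype V] [DecidableEq V]
    (G : SimpleGraph V) [DecidableRel G.Adj]
    (n : ℕ) (hn : Fintype.card V = n)
    (m : ℕ) (hm : G.edgeFinset.card = m)
    (lam : ℝ)
    (hlam : ∃ hA : (G.adjMatrix ℝ).IsHermitian, IsLargest hA.eigenvalues lam)
    (S : Finset V)
    (hdef : ∀ v ∈ S, (G.neighborFinset v \ S).card ≤ (G.neighborFinset v ∩ S).card + 1)
    (hoff : ∀ v ∉ S, (G.neighborFinset v \ S).card + 1 ≤ (G.neighborFinset v ∩ S).card)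
    :
    ⌈(2 * (m : ℝ) + n) / (4 * (lam + 1))⌉ ≤ (S.card : ℤ) := by
  obtain ⟨hA, -, hle⟩ := hlam
  set t := ∑ v ∈ S, #(G.neighborFinset v ∩ S)
  have hcount : 2 * m + n ≤ 4 * t + 4 * #S := by
    have hedges := G.two_mul_card_edgeFinset_add_card_le hdef hoff
    have hdegree := sum_degree_le_of_defensive hdef
    rw [sum_card_neighborFinset_inter_eq_sum_degree] at hedges
    omega
  have hcount' : (2 * m + n : ℝ) ≤ 4 * t + 4 * #S := by exact_mod_cast hcount
  have hrayleigh : (t : ℝ) ≤ lam * #S := G.sum_card_neighborFinset_inter_le_mul_card S hA hle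
  apply Int.ceil_div_le_of_le_mul (by positivity) (by positivity)
  push_cast
  linarith

theorem stmt_14 {V : Type*} [Fintype V] [DecidableEq V]
    (G : SimpleGraph V) [DecidableRel G.Adj]
    (n : ℕ) (hn : Fintype.card V = n)
    (m : ℕ) (hm : G.edgeFinset.card = m)
    (lam : ℝ)
    (hlam : ∃ hA : (G.adjMatrix ℝ).IsHermitian, IsLargest hA.eigenvalues lam)
    (S : Finset V) (hS : S.Nonempty)
    (hdef : ∀ v ∈ S, (G.neighborFinset v \ S).card ≤ (G.neighborFinset v ∩ S).card + 1)
    (hoff : ∀ v ∉ S, (G.neighborFinset v \ S).card + 1 ≤ (G.neighborFinset v ∩ S).card)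
    :
    ⌈(2 * (m : ℝ) + n) / (4 * (lam + 1))⌉ ≤ (S.card : ℤ) :=
  stmt_14_general G n hn m hm lam hlam S hdef hoff
end

section
/- Let Γ be a simple graph of order n and size m. Then every global strong dual alliance S in Γ satisfies |S| ≥ ⌈(1 + √(1+8(n+m)))/4⌉; in particular the global strong dual alliance number satisfies γ_{â_d}(Γ) ≥ ⌈(1 + √(1+8(n+m)))/4⌉. -/
open Finset SimpleGraph

theorem stmt_17 {V : Type*} [Fintype V] [DecidableEq V]
    (G : SimpleGraph V) [DecidableRel G.Adj]
    (n : ℕ) (hn : Fintype.card V = n)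
    (m : ℕ) (hm : G.edgeFinset.card = m)
    (S : Finset V) (hS : S.Nonempty)
    (hdef : ∀ v ∈ S, (G.neighborFinset v \ S).card ≤ (G.neighborFinset v ∩ S).card)
    (hoff : ∀ v ∉ S, (G.neighborFinset v \ S).card + 2 ≤ (G.neighborFinset v ∩ S).card)
    :
    ⌈(1 + Real.sqrt (1 + 8 * ((n : ℝ) + m))) / 4⌉ ≤ (S.card : ℤ) := by
  classical
  set s := S.card with hs
  have hs1 : 1 ≤ s := hS.card_pos
  -- each vertex of S has at most s-1 neighbors in S
  have hA : ∀ v ∈ S, (G.neighborFinset v ∩ S).card + 1 ≤ s := by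
    intro v hv
    have hsub : G.neighborFinset v ∩ S ⊆ S.erase v := by
      intro w hw
      simp only [mem_inter, mem_neighborFinset] at hw
      exact Finset.mem_erase.2 ⟨fun h => G.irrefl (h ▸ hw.1), hw.2⟩
    have h1 := card_le_card hsub
    have h2 : (S.erase v).card + 1 = s := Finset.card_erase_add_one hv
    omega
  have hA' : ∑ v ∈ S, (G.neighborFinset v ∩ S).card + s ≤ s * s := by
    have := Finset.sum_le_sum hA
    rw [Finset.sum_add_distrib, Finset.sum_const, smul_eq_mul, mul_one,
      Finset.sum_const, smul_eq_mul] at this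
    exact this
  -- crossing edges counted from both sides
  have cross : ∑ v ∈ S, (G.neighborFinset v \ S).card
      = ∑ w ∈ Sᶜ, (G.neighborFinset w ∩ S).card := by
    have h1 : ∀ v, (G.neighborFinset v \ S) = Sᶜ.filter (fun w => G.Adj v w) := by
      intro v; ext w
      simp [mem_neighborFinset, and_comm]
    have h2 : ∀ w, (G.neighborFinset w ∩ S) = S.filter (fun v => G.Adj w v) := by
      intro w; ext v
      simp [mem_neighborFinset, and_comm]
    simp only [h1, h2, Finset.card_filter]
    rw [Finset.sum_comm]
    refine Finset.sum_congr rfl fun w _ => Finset.sum_congr rfl fun v _ => ?_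
    simp [G.adj_comm]
  -- sums of degrees split
  have hdeg : ∀ v : V, G.degree v
      = (G.neighborFinset v ∩ S).card + (G.neighborFinset v \ S).card := by
    intro v
    rw [Finset.card_inter_add_card_sdiff]
    rfl
  have twoM : ∑ v ∈ S, G.degree v + ∑ v ∈ Sᶜ, G.degree v = 2 * m := by
    rw [Finset.sum_add_sum_compl, G.sum_degrees_eq_twice_card_edges, hm]
  have hCS : ∑ v ∈ S, (G.neighborFinset v \ S).card
      ≤ ∑ v ∈ S, (G.neighborFinset v ∩ S).card := Finset.sum_le_sum hdef
  have hD : ∑ v ∈ Sᶜ, (G.neighborFinset v \ S).card + 2 * Sᶜ.card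
      ≤ ∑ v ∈ Sᶜ, (G.neighborFinset v ∩ S).card := by
    have := Finset.sum_le_sum (fun v hv => hoff v (Finset.mem_compl.1 hv))
    rw [Finset.sum_add_distrib, Finset.sum_const, smul_eq_mul] at this
    omega
  have hcomplcard : Sᶜ.card + s = n := by
    rw [Finset.card_compl, hn]
    have hsn : s ≤ n := hn ▸ Finset.card_le_univ S
    omega
  -- key combinatorial inequality in ℤ
  have hkey : (n : ℤ) + m ≤ 2 * s ^ 2 - s := by
    have e1 : ∑ v ∈ S, G.degree v
        = ∑ v ∈ S, (G.neighborFinset v ∩ S).card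
          + ∑ v ∈ S, (G.neighborFinset v \ S).card := by
      rw [← Finset.sum_add_distrib]; exact Finset.sum_congr rfl fun v _ => hdeg v
    have e2 : ∑ v ∈ Sᶜ, G.degree v
        = ∑ v ∈ Sᶜ, (G.neighborFinset v ∩ S).card
          + ∑ v ∈ Sᶜ, (G.neighborFinset v \ S).card := by
      rw [← Finset.sum_add_distrib]; exact Finset.sum_congr rfl fun v _ => hdeg v
    have hn2 : 2 * m + 2 * n + 2 * s ≤ 4 * (s * s) := by omega
    have hz : (2 : ℤ) * m + 2 * n + 2 * s ≤ 4 * (s * s) := by exact_mod_cast hn2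
    nlinarith [hz]
  -- final analytic step
  rw [Int.ceil_le]
  have hsr : (1 : ℝ) ≤ (s : ℝ) := by exact_mod_cast hs1
  have hsqrt : Real.sqrt (1 + 8 * ((n : ℝ) + m)) ≤ 4 * (s : ℝ) - 1 := by
    rw [show (4 * (s : ℝ) - 1) = Real.sqrt ((4 * (s : ℝ) - 1) ^ 2) from
      (Real.sqrt_sq (by linarith)).symm]
    apply Real.sqrt_le_sqrt
    have hkr : ((n : ℝ) + m) ≤ 2 * (s : ℝ) ^ 2 - s := by exact_mod_cast hkey
    nlinarith
  push_cast
  rw [div_le_iff₀ (by norm_num : (0:ℝ) < 4)]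
  linarith
end

section
/- Let Γ be a simple graph of order n and size m. If S is a global dual alliance in Γ, then 4|S| + 4·Σ_{v∈S}|N_S(v)| ≥ 2m + n. -/
open Finset SimpleGraph

theorem stmt_18 {V : Type*} [Fintype V] [DecidableEq V]
    (G : SimpleGraph V) [DecidableRel G.Adj]
    (n : ℕ) (hn : Fintype.card V = n)
    (m : ℕ) (hm : G.edgeFinset.card = m)
    (S : Finset V) (hS : S.Nonempty)
    (hdef : ∀ v ∈ S, (G.neighborFinset v \ S).card ≤ (G.neighborFinset v ∩ S).card + 1)
    (hoff : ∀ v ∉ S, (G.neighborFinset v \ S).card + 1 ≤ (G.neighborFinset v ∩ S).card)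
    :
    2 * m + n ≤ 4 * S.card + 4 * ∑ v ∈ S, (G.neighborFinset v ∩ S).card := by
  classical
  set A := ∑ v ∈ S, (G.neighborFinset v ∩ S).card with hA
  set B := ∑ v ∈ S, (G.neighborFinset v \ S).card with hB
  set C := ∑ v ∈ Sᶜ, (G.neighborFinset v ∩ S).card with hC
  set D := ∑ v ∈ Sᶜ, (G.neighborFinset v \ S).card with hD
  -- intersection card as sum of indicators
  have hint : ∀ v : V, (G.neighborFinset v ∩ S).card
      = ∑ u ∈ S, if G.Adj v u then 1 else 0 := by
    intro v
    rw [← Finset.card_filter]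
    congr 1
    ext u
    simp [mem_neighborFinset, and_comm]
  have hsd : ∀ v : V, (G.neighborFinset v \ S).card
      = ∑ u ∈ Sᶜ, if G.Adj v u then 1 else 0 := by
    intro v
    rw [← Finset.card_filter]
    congr 1
    ext u
    simp [mem_neighborFinset, and_comm]
  -- double counting: B = C
  have hBC : B = C := by
    rw [hB, hC]
    simp only [hint, hsd]
    rw [Finset.sum_comm]
    apply Finset.sum_congr rfl
    intro u hu
    apply Finset.sum_congr rfl
    intro v hv
    simp [G.adj_comm]
  -- degree sum
  have hdeg : ∀ v : V, G.degree v
      = (G.neighborFinset v ∩ S).card + (G.neighborFinset v \ S).card := by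
    intro v
    rw [SimpleGraph.degree, ← Finset.card_inter_add_card_sdiff (G.neighborFinset v) S]
  have h2m : 2 * m = A + B + (C + D) := by
    rw [← hm, ← SimpleGraph.sum_degrees_eq_twice_card_edges]
    rw [← Finset.sum_add_sum_compl S (fun v => G.degree v)]
    simp only [hdeg, Finset.sum_add_distrib, hA, hB, hC, hD]
  have hnn : n = S.card + Sᶜ.card := by
    rw [← hn, ← Finset.card_add_card_compl S]
  have h1 : B ≤ A + S.card := by
    rw [hB, hA]
    calc ∑ v ∈ S, (G.neighborFinset v \ S).card
        ≤ ∑ v ∈ S, ((G.neighborFinset v ∩ S).card + 1) :=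
          Finset.sum_le_sum fun v hv => hdef v hv
      _ = (∑ v ∈ S, (G.neighborFinset v ∩ S).card) + S.card := by
          rw [Finset.sum_add_distrib]; simp
  have h2 : D + Sᶜ.card ≤ C := by
    rw [hD, hC]
    calc (∑ v ∈ Sᶜ, (G.neighborFinset v \ S).card) + Sᶜ.card
        = ∑ v ∈ Sᶜ, ((G.neighborFinset v \ S).card + 1) := by
          rw [Finset.sum_add_distrib]; simp
      _ ≤ ∑ v ∈ Sᶜ, (G.neighborFinset v ∩ S).card :=
          Finset.sum_le_sum fun v hv => hoff v (by simpa using hv)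
  omega
end

section
/- Let Γ be a simple graph of order n and size m. If S is a global strong dual alliance in Γ, then 2·Σ_{v∈S}|N_S(v)| ≥ m + n − |S|. -/
open Finset SimpleGraph

theorem stmt_19 {V : Type*} [Fintype V] [DecidableEq V]
    (G : SimpleGraph V) [DecidableRel G.Adj]
    (n : ℕ) (hn : Fintype.card V = n)
    (m : ℕ) (hm : G.edgeFinset.card = m)
    (S : Finset V) (hS : S.Nonempty)
    (hdef : ∀ v ∈ S, (G.neighborFinset v \ S).card ≤ (G.neighborFinset v ∩ S).card)
    (hoff : ∀ v ∉ S, (G.neighborFinset v \ S).card + 2 ≤ (G.neighborFinset v ∩ S).card)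
    :
    ((m : ℤ) + n) - S.card ≤ 2 * ((∑ v ∈ S, (G.neighborFinset v ∩ S).card : ℕ) : ℤ) := by
  classical
  set Sc : Finset V := Finset.univ \ S with hSc
  have hSle : S.card ≤ n := by
    rw [← hn, ← Finset.card_univ]; exact Finset.card_le_card (Finset.subset_univ S)
  have hcardSc : Sc.card = n - S.card := by
    rw [hSc, Finset.card_sdiff_of_subset (Finset.subset_univ S), Finset.card_univ, hn]
  have hinter : ∀ v : V, G.neighborFinset v ∩ S = S.filter (fun u => G.Adj v u) := by
    intro v; ext u; simp [Finset.mem_filter, and_comm]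
  have hdiffeq : ∀ v : V, G.neighborFinset v \ S = Sc.filter (fun u => G.Adj v u) := by
    intro v; ext u; simp [hSc, Finset.mem_filter]; tauto
  -- double counting of cross edges
  have hswap : ∑ v ∈ S, (G.neighborFinset v \ S).card
      = ∑ v ∈ Sc, (G.neighborFinset v ∩ S).card := by
    simp only [hinter, hdiffeq, Finset.card_filter]
    rw [Finset.sum_comm]
    apply Finset.sum_congr rfl
    intro u _
    apply Finset.sum_congr rfl
    intro v _
    simp [G.adj_comm]
  -- degree sum decomposition
  have hdeg : ∀ v : V, (G.neighborFinset v ∩ S).card + (G.neighborFinset v \ S).card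
      = G.degree v := by
    intro v
    rw [Finset.card_inter_add_card_sdiff]
    rfl
  have hsum : (∑ v ∈ S, (G.neighborFinset v ∩ S).card)
      + (∑ v ∈ S, (G.neighborFinset v \ S).card)
      + ((∑ v ∈ Sc, (G.neighborFinset v ∩ S).card)
      + (∑ v ∈ Sc, (G.neighborFinset v \ S).card)) = 2 * m := by
    have h1 : ∑ v ∈ Sc, G.degree v + ∑ v ∈ S, G.degree v = ∑ v : V, G.degree v :=
      Finset.sum_sdiff (Finset.subset_univ S)
    have h2 : ∑ v : V, G.degree v = 2 * m := by
      rw [← hm]; exact G.sum_degrees_eq_twice_card_edges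
    calc (∑ v ∈ S, (G.neighborFinset v ∩ S).card)
        + (∑ v ∈ S, (G.neighborFinset v \ S).card)
        + ((∑ v ∈ Sc, (G.neighborFinset v ∩ S).card)
        + (∑ v ∈ Sc, (G.neighborFinset v \ S).card))
        = (∑ v ∈ S, G.degree v) + (∑ v ∈ Sc, G.degree v) := by
          rw [← Finset.sum_add_distrib, ← Finset.sum_add_distrib]
          simp only [hdeg]
      _ = 2 * m := by omega
  have hb : (∑ v ∈ S, (G.neighborFinset v \ S).card)
      ≤ ∑ v ∈ S, (G.neighborFinset v ∩ S).card :=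
    Finset.sum_le_sum hdef
  have hc : (∑ v ∈ Sc, (G.neighborFinset v \ S).card) + 2 * (n - S.card)
      ≤ ∑ v ∈ Sc, (G.neighborFinset v ∩ S).card := by
    have := Finset.sum_le_sum (s := Sc) (f := fun v => (G.neighborFinset v \ S).card + 2)
      (g := fun v => (G.neighborFinset v ∩ S).card)
      (fun v hv => hoff v (Finset.mem_sdiff.mp hv).2)
    rw [Finset.sum_add_distrib] at this
    simp [hcardSc, mul_comm] at this
    omega
  have key : m + (n - S.card) ≤ 2 * ∑ v ∈ S, (G.neighborFinset v ∩ S).card := by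
    omega
  have : (m : ℤ) + ((n : ℤ) - S.card) ≤ 2 * ∑ v ∈ S, (G.neighborFinset v ∩ S).card := by
    have h2 := Nat.cast_le (α := ℤ) |>.mpr key
    push_cast at h2
    omega
  linarith
end
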